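/- arXiv:2604.07136 — 2 statements merged into one kernel-verified Lean document; each statement's English description precedes it below -/
import Mathlib

section
/- Let K ∈ ℝ^{m×m} and Ξ₀ ∈ ℝ^{n×n} be symmetric positive definite, and let Ũ ∈ ℝ^{m×r}, Ṽ ∈ ℝ^{n×r} satisfy Ũᵀ K Ũ = I_r and Ṽᵀ Ξ₀ Ṽ = I_r. For Z ∈ ℝ^{m×n}, define M̃ := Ũᵀ K Z Ξ₀ Ṽ, Ũ_p := Z Ξ₀ Ṽ − Ũ M̃, Ṽ_p := Zᵀ K Ũ − Ṽ M̃ᵀ, and P(Z) := Ũ M̃ Ṽᵀ + Ũ_p Ṽᵀ + Ũ Ṽ_pᵀ. Then: (i) Ũᵀ K Ũ_p = 0 and Ṽᵀ Ξ₀ Ṽ_p = 0; (ii) P(Z) = P_Ũ Z P_Ṽ + (I − P_Ũ) Z P_Ṽ + P_Ũ Z (I − P_Ṽ), where P_Ũ := Ũ Ũᵀ K and P_Ṽ := Ξ₀ Ṽ Ṽᵀ; (iii) for every T = Ũ M′ Ṽᵀ + U_p′ Ṽᵀ + Ũ (V_p′)ᵀ with M′ ∈ ℝ^{r×r}, Ũᵀ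 K U_p′ = 0 and Ṽᵀ Ξ₀ V_p′ = 0, one has ⟨Z − P(Z), T⟩_P = 0, where ⟨A,C⟩_P := trace(Ξ₀ Aᵀ K C). -/
open Matrix

/-- Properties of the tangent-space projection in the preconditioned metric:
(i) the factors satisfy the gauge conditions; (ii) the projection has the three-term projector
form; (iii) `Z − P(Z)` is `⟨·,·⟩_P`-orthogonal to every tangent vector. -/
theorem tangent_space_projection_properties
    (m n r : ℕ)
    (K : Matrix (Fin m) (Fin m) ℝ) (Xi0 : Matrix (Fin n) (Fin n) ℝ)
    (hK : K.PosDef) (hXi0 : Xi0.PosDef)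
    (U : Matrix (Fin m) (Fin r) ℝ) (V : Matrix (Fin n) (Fin r) ℝ)
    (hU : Uᵀ * K * U = 1) (hV : Vᵀ * Xi0 * V = 1) :
    ∀ (Z : Matrix (Fin m) (Fin n) ℝ) (M : Matrix (Fin r) (Fin r) ℝ)
      (Up : Matrix (Fin m) (Fin r) ℝ) (Vp : Matrix (Fin n) (Fin r) ℝ)
      (PZ : Matrix (Fin m) (Fin n) ℝ),
      M = Uᵀ * K * Z * Xi0 * V →
      Up = Z * Xi0 * V - U * M →
      Vp = Zᵀ * K * U - V * Mᵀ →
      PZ = U * M * Vᵀ + Up * Vᵀ + U * Vpᵀ →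
      (Uᵀ * K * Up = 0 ∧ Vᵀ * Xi0 * Vp = 0) ∧
      PZ = (U * Uᵀ * K) * Z * (Xi0 * V * Vᵀ)
            + (1 - U * Uᵀ * K) * Z * (Xi0 * V * Vᵀ)
            + (U * Uᵀ * K) * Z * (1 - Xi0 * V * Vᵀ) ∧
      (∀ (M' : Matrix (Fin r) (Fin r) ℝ)
         (Up' : Matrix (Fin m) (Fin r) ℝ) (Vp' : Matrix (Fin n) (Fin r) ℝ),
         Uᵀ * K * Up' = 0 → Vᵀ * Xi0 * Vp' = 0 →
         Matrix.trace (Xi0 * (Z - PZ)ᵀ * K *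
           (U * M' * Vᵀ + Up' * Vᵀ + U * Vp'ᵀ)) = 0) := by
  have hKs : Kᵀ = K := (by simpa using hK.1 : K.IsSymm)
  have hXs : Xi0ᵀ = Xi0 := (by simpa using hXi0.1 : Xi0.IsSymm)
  have hU2 : Uᵀ * (K * U) = 1 := by rw [← Matrix.mul_assoc, hU]
  have hV2 : Vᵀ * (Xi0 * V) = 1 := by rw [← Matrix.mul_assoc, hV]
  have hUann : ∀ (p : ℕ) (X : Matrix (Fin r) (Fin p) ℝ), Uᵀ * (K * (U * X)) = X := by
    intro p X
    rw [← Matrix.mul_assoc, ← Matrix.mul_assoc, hU, Matrix.one_mul]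
  have hVann : ∀ (p : ℕ) (X : Matrix (Fin r) (Fin p) ℝ), Vᵀ * (Xi0 * (V * X)) = X := by
    intro p X
    rw [← Matrix.mul_assoc, ← Matrix.mul_assoc, hV, Matrix.one_mul]
  intro Z M Up Vp PZ hM hUp hVp hPZ
  subst hM hUp hVp hPZ
  have hVpT : (Zᵀ * K * U - V * (Uᵀ * K * Z * Xi0 * V)ᵀ)ᵀ
      = Uᵀ * K * Z - Uᵀ * K * Z * Xi0 * V * Vᵀ := by
    simp only [Matrix.transpose_sub, Matrix.transpose_mul, hKs, hXs,
      Matrix.transpose_transpose]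
    simp [Matrix.mul_assoc]
  -- part (i)
  have h1 : Uᵀ * K * (Z * Xi0 * V - U * (Uᵀ * K * Z * Xi0 * V)) = 0 := by
    simp [Matrix.mul_sub, Matrix.mul_assoc, hUann]
  have h2 : Vᵀ * Xi0 * (Zᵀ * K * U - V * (Uᵀ * K * Z * Xi0 * V)ᵀ) = 0 := by
    simp only [Matrix.mul_sub, Matrix.mul_assoc, hVann]
    simp only [Matrix.transpose_mul, hKs, hXs, Matrix.transpose_transpose]
    simp [Matrix.mul_assoc]
  refine ⟨⟨h1, h2⟩, ?_, ?_⟩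
  -- part (ii)
  · rw [hVpT]
    simp only [Matrix.sub_mul, Matrix.mul_sub, Matrix.one_mul, Matrix.mul_one,
      Matrix.mul_assoc]
  -- part (iii)
  · intro M' Up' Vp' hUp' hVp'
    set PU : Matrix (Fin m) (Fin m) ℝ := U * Uᵀ * K with hPU
    set PV : Matrix (Fin n) (Fin n) ℝ := Xi0 * V * Vᵀ with hPV
    have hW : Z - (U * (Uᵀ * K * Z * Xi0 * V) * Vᵀ
        + (Z * Xi0 * V - U * (Uᵀ * K * Z * Xi0 * V)) * Vᵀ
        + U * (Zᵀ * K * U - V * (Uᵀ * K * Z * Xi0 * V)ᵀ)ᵀ)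
        = (1 - PU) * Z * (1 - PV) := by
      rw [hPU, hPV, hVpT]
      simp only [Matrix.sub_mul, Matrix.mul_sub, Matrix.one_mul, Matrix.mul_one,
        Matrix.mul_assoc]
      abel
    rw [hW]
    have hWT : ((1 - PU) * Z * (1 - PV))ᵀ = (1 - PV)ᵀ * Zᵀ * (1 - PU)ᵀ := by
      simp [Matrix.mul_assoc]
    have hPUT : (1 - PU)ᵀ = 1 - K * (U * Uᵀ) := by
      simp [hPU, Matrix.transpose_sub, Matrix.transpose_mul, hKs, Matrix.mul_assoc]
    have hPVT : (1 - PV)ᵀ = 1 - V * (Vᵀ * Xi0) := by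
      simp [hPV, Matrix.transpose_sub, Matrix.transpose_mul, hXs, Matrix.mul_assoc]
    have keyU : (1 - PU)ᵀ * (K * U) = 0 := by
      rw [hPUT]
      simp [Matrix.sub_mul, Matrix.mul_assoc, hU2]
    have keyV : (Vᵀ * Xi0) * (1 - PV)ᵀ = 0 := by
      rw [hPVT]
      simp [Matrix.mul_sub, Matrix.mul_assoc, hVann]
    rw [Matrix.mul_add, Matrix.mul_add, Matrix.trace_add, Matrix.trace_add]
    have tA : Matrix.trace (Xi0 * ((1 - PU) * Z * (1 - PV))ᵀ * K * (U * M' * Vᵀ)) = 0 := by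
      have e : Xi0 * ((1 - PU) * Z * (1 - PV))ᵀ * K * (U * M' * Vᵀ)
          = Xi0 * ((1 - PV)ᵀ * (Zᵀ * (((1 - PU)ᵀ * (K * U)) * (M' * Vᵀ)))) := by
        rw [hWT]; simp [Matrix.mul_assoc]
      rw [e, keyU]
      simp
    have tC : Matrix.trace (Xi0 * ((1 - PU) * Z * (1 - PV))ᵀ * K * (U * Vp'ᵀ)) = 0 := by
      have e : Xi0 * ((1 - PU) * Z * (1 - PV))ᵀ * K * (U * Vp'ᵀ)
          = Xi0 * ((1 - PV)ᵀ * (Zᵀ * (((1 - PU)ᵀ * (K * U)) * Vp'ᵀ))) := by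
        rw [hWT]; simp [Matrix.mul_assoc]
      rw [e, keyU]
      simp
    have tB : Matrix.trace (Xi0 * ((1 - PU) * Z * (1 - PV))ᵀ * K * (Up' * Vᵀ)) = 0 := by
      have e : Xi0 * ((1 - PU) * Z * (1 - PV))ᵀ * K * (Up' * Vᵀ)
          = (Xi0 * ((1 - PV)ᵀ * (Zᵀ * ((1 - PU)ᵀ * (K * Up'))))) * Vᵀ := by
        rw [hWT]; simp [Matrix.mul_assoc]
      rw [e, Matrix.trace_mul_comm]
      have e2 : Vᵀ * (Xi0 * ((1 - PV)ᵀ * (Zᵀ * ((1 - PU)ᵀ * (K * Up')))))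
          = (((Vᵀ * Xi0) * (1 - PV)ᵀ) * (Zᵀ * ((1 - PU)ᵀ * (K * Up')))) := by
        simp [Matrix.mul_assoc]
      rw [e2, keyV]
      simp
    rw [tA, tB, tC]
    ring
end

section
/- Let K ∈ ℝ^{m×m} and Ξ₀ ∈ ℝ^{n×n} be symmetric, H ∈ ℝ^{m×n}, and let σ, u, v be differentiable functions on a neighborhood of 0 with values in ℝ, ℝ^m, ℝ^n respectively, such that for all t near 0: (Y + tH) Ξ₀ v(t) = σ(t) u(t), (Y + tH)ᵀ K u(t) = σ(t) v(t), u(t)ᵀ K u(t) = 1, and v(t)ᵀ Ξ₀ v(t) = 1, where Y ∈ ℝ^{m×n}. Then the derivative of the singular value at t = 0 is σ′(0) = u(0)ᵀ K H Ξ₀ v(0). -/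
open Matrix

private lemma hasDerivAt_dot {k : ℕ} {a b : ℝ → Fin k → ℝ} {a' b' : Fin k → ℝ} {x : ℝ}
    (ha : HasDerivAt a a' x) (hb : HasDerivAt b b' x) :
    HasDerivAt (fun t => a t ⬝ᵥ b t) (a' ⬝ᵥ b x + a x ⬝ᵥ b') x := by
  simp only [dotProduct, ← Finset.sum_add_distrib]
  exact HasDerivAt.fun_sum fun i _ => (hasDerivAt_pi.1 ha i).mul (hasDerivAt_pi.1 hb i)

private lemma hasDerivAt_mulVec {k l : ℕ} (M : Matrix (Fin k) (Fin l) ℝ)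
    {v : ℝ → Fin l → ℝ} {v' : Fin l → ℝ} {x : ℝ} (hv : HasDerivAt v v' x) :
    HasDerivAt (fun t => M.mulVec (v t)) (M.mulVec v') x := by
  rw [hasDerivAt_pi]
  intro i
  simp only [mulVec, dotProduct]
  exact HasDerivAt.fun_sum fun j _ => (hasDerivAt_pi.1 hv j).const_mul (M i j)

/-- If `(σ(t), u(t), v(t))` is a differentiable family of weighted singular
triples of `Y + tH` (with weights `K`, `Ξ₀`) on a neighborhood of `0`, then
`σ′(0) = u(0)ᵀ K H Ξ₀ v(0)`. -/
theorem derivative_of_weighted_singular_value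
    (m n : ℕ)
    (K : Matrix (Fin m) (Fin m) ℝ) (Xi0 : Matrix (Fin n) (Fin n) ℝ)
    (hK : K.IsSymm) (hXi0 : Xi0.IsSymm)
    (Y H : Matrix (Fin m) (Fin n) ℝ)
    (σ : ℝ → ℝ) (u : ℝ → Fin m → ℝ) (v : ℝ → Fin n → ℝ)
    (s : Set ℝ) (hs : s ∈ nhds (0 : ℝ))
    (hσ : DifferentiableOn ℝ σ s)
    (hu : DifferentiableOn ℝ u s)
    (hv : DifferentiableOn ℝ v s)
    (h1 : ∀ t ∈ s, ((Y + t • H) * Xi0).mulVec (v t) = σ t • u t)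
    (h2 : ∀ t ∈ s, ((Y + t • H)ᵀ * K).mulVec (u t) = σ t • v t)
    (h3 : ∀ t ∈ s, u t ⬝ᵥ K.mulVec (u t) = 1)
    (h4 : ∀ t ∈ s, v t ⬝ᵥ Xi0.mulVec (v t) = 1) :
    deriv σ 0 = u 0 ⬝ᵥ (K * H * Xi0).mulVec (v 0) := by
  have h0s : (0:ℝ) ∈ s := mem_of_mem_nhds hs
  set u' := deriv u 0 with hu'def
  set v' := deriv v 0 with hv'def
  have hud : HasDerivAt u u' 0 :=
    ((hu.differentiableAt hs)).hasDerivAt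
  have hvd : HasDerivAt v v' 0 :=
    ((hv.differentiableAt hs)).hasDerivAt
  -- facts at t = 0
  have e1 : (Y * Xi0).mulVec (v 0) = σ 0 • u 0 := by
    have := h1 0 h0s; simpa using this
  have e2 : (Yᵀ * K).mulVec (u 0) = σ 0 • v 0 := by
    have := h2 0 h0s; simpa using this
  -- derivative of the normalization conditions
  have hnu : u' ⬝ᵥ K.mulVec (u 0) = 0 := by
    have hD : HasDerivAt (fun t => u t ⬝ᵥ K.mulVec (u t))
        (u' ⬝ᵥ K.mulVec (u 0) + u 0 ⬝ᵥ K.mulVec u') 0 :=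
      hasDerivAt_dot hud (hasDerivAt_mulVec K hud)
    have hEq : (fun t => u t ⬝ᵥ K.mulVec (u t)) =ᶠ[nhds (0:ℝ)] fun _ => (1:ℝ) :=
      Filter.eventuallyEq_of_mem hs h3
    have hD1 : HasDerivAt (fun _ : ℝ => (1:ℝ))
        (u' ⬝ᵥ K.mulVec (u 0) + u 0 ⬝ᵥ K.mulVec u') 0 := hD.congr_of_eventuallyEq hEq.symm
    have hzero : u' ⬝ᵥ K.mulVec (u 0) + u 0 ⬝ᵥ K.mulVec u' = 0 :=
      hD1.unique (hasDerivAt_const 0 1)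
    have hsym : u 0 ⬝ᵥ K.mulVec u' = u' ⬝ᵥ K.mulVec (u 0) := by
      rw [dotProduct_mulVec, ← mulVec_transpose, hK.eq, dotProduct_comm]
    linarith [hzero, hsym]
  have hnv : v 0 ⬝ᵥ Xi0.mulVec v' = 0 := by
    have hD : HasDerivAt (fun t => v t ⬝ᵥ Xi0.mulVec (v t))
        (v' ⬝ᵥ Xi0.mulVec (v 0) + v 0 ⬝ᵥ Xi0.mulVec v') 0 :=
      hasDerivAt_dot hvd (hasDerivAt_mulVec Xi0 hvd)
    have hEq : (fun t => v t ⬝ᵥ Xi0.mulVec (v t)) =ᶠ[nhds (0:ℝ)] fun _ => (1:ℝ) :=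
      Filter.eventuallyEq_of_mem hs h4
    have hD1 : HasDerivAt (fun _ : ℝ => (1:ℝ))
        (v' ⬝ᵥ Xi0.mulVec (v 0) + v 0 ⬝ᵥ Xi0.mulVec v') 0 := hD.congr_of_eventuallyEq hEq.symm
    have hzero : v' ⬝ᵥ Xi0.mulVec (v 0) + v 0 ⬝ᵥ Xi0.mulVec v' = 0 :=
      hD1.unique (hasDerivAt_const 0 1)
    have hsym : v 0 ⬝ᵥ Xi0.mulVec v' = v' ⬝ᵥ Xi0.mulVec (v 0) := by
      rw [dotProduct_mulVec, ← mulVec_transpose, hXi0.eq, dotProduct_comm]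
    linarith [hzero, hsym]
  -- σ agrees with an explicit function near 0
  set A := K * Y * Xi0 with hA
  set B := K * H * Xi0 with hB
  have hσeq : ∀ t ∈ s, σ t = u t ⬝ᵥ A.mulVec (v t) + t * (u t ⬝ᵥ B.mulVec (v t)) := by
    intro t ht
    have expand : A.mulVec (v t) + t • B.mulVec (v t) = K.mulVec (σ t • u t) := by
      rw [← h1 t ht, hA, hB]
      simp [Matrix.add_mul, Matrix.smul_mul, Matrix.mul_smul, add_mulVec, smul_mulVec,
        Matrix.mul_assoc, ← mulVec_mulVec, mulVec_add, mulVec_smul]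
    have : u t ⬝ᵥ (A.mulVec (v t) + t • B.mulVec (v t)) = σ t := by
      rw [expand, mulVec_smul, dotProduct_smul, smul_eq_mul, h3 t ht, mul_one]
    rw [dotProduct_add, dotProduct_smul, smul_eq_mul] at this
    linarith [this]
  -- derivative of the explicit function
  have hdA : HasDerivAt (fun t => u t ⬝ᵥ A.mulVec (v t))
      (u' ⬝ᵥ A.mulVec (v 0) + u 0 ⬝ᵥ A.mulVec v') 0 :=
    hasDerivAt_dot hud (hasDerivAt_mulVec A hvd)
  have hdB : HasDerivAt (fun t => u t ⬝ᵥ B.mulVec (v t))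
      (u' ⬝ᵥ B.mulVec (v 0) + u 0 ⬝ᵥ B.mulVec v') 0 :=
    hasDerivAt_dot hud (hasDerivAt_mulVec B hvd)
  have hdid : HasDerivAt (fun t : ℝ => t) 1 0 := hasDerivAt_id 0
  have hdg : HasDerivAt (fun t => u t ⬝ᵥ A.mulVec (v t) + t * (u t ⬝ᵥ B.mulVec (v t)))
      ((u' ⬝ᵥ A.mulVec (v 0) + u 0 ⬝ᵥ A.mulVec v')
        + (1 * (u 0 ⬝ᵥ B.mulVec (v 0))
           + 0 * (u' ⬝ᵥ B.mulVec (v 0) + u 0 ⬝ᵥ B.mulVec v'))) 0 :=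
    hdA.add (hdid.mul hdB)
  have hdσ : HasDerivAt σ
      ((u' ⬝ᵥ A.mulVec (v 0) + u 0 ⬝ᵥ A.mulVec v')
        + (1 * (u 0 ⬝ᵥ B.mulVec (v 0))
           + 0 * (u' ⬝ᵥ B.mulVec (v 0) + u 0 ⬝ᵥ B.mulVec v'))) 0 :=
    hdg.congr_of_eventuallyEq
      (Filter.eventuallyEq_of_mem hs hσeq)
  -- kill the two spurious terms
  have t1 : u' ⬝ᵥ A.mulVec (v 0) = 0 := by
    have : A.mulVec (v 0) = σ 0 • K.mulVec (u 0) := by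
      rw [hA, Matrix.mul_assoc, ← mulVec_mulVec, e1, mulVec_smul]
    rw [this, dotProduct_smul, smul_eq_mul, hnu, mul_zero]
  have t2 : u 0 ⬝ᵥ A.mulVec v' = 0 := by
    have htr : Aᵀ.mulVec (u 0) = σ 0 • Xi0.mulVec (v 0) := by
      rw [hA, transpose_mul, transpose_mul, hK.eq, hXi0.eq,
        ← mulVec_mulVec, e2, mulVec_smul]
    calc u 0 ⬝ᵥ A.mulVec v' = Aᵀ.mulVec (u 0) ⬝ᵥ v' := by
          rw [dotProduct_mulVec, ← mulVec_transpose]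
      _ = σ 0 * (Xi0.mulVec (v 0) ⬝ᵥ v') := by rw [htr, smul_dotProduct, smul_eq_mul]
      _ = σ 0 * (v 0 ⬝ᵥ Xi0.mulVec v') := by
          rw [dotProduct_mulVec, ← mulVec_transpose, hXi0.eq, dotProduct_comm]
      _ = 0 := by rw [hnv, mul_zero]
  rw [hdσ.deriv, t1, t2, hB]
  ring
end
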